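/- arXiv:2012.11554 — 3 statements merged into one kernel-verified Lean document; each statement's English description precedes it below -/
import Mathlib

section
/- Let κ > 0, λ > 0, and β ∈ (1, 2). Let (a_i)_{i∈ℕ}, (μ_i)_{i∈ℕ}, (ζ_i)_{i∈ℕ} be real sequences with μ_i > 0 and ζ_i ≥ κ·μ_i for every i. Then, with sums taken in [0, ∞], Σ_{i} λ²·a_i² / ((λ + ζ_i)²·μ_i) ≤ (λ/κ)^{β−1} · Σ_{i} a_i² · μ_i^{−β}. -/
/-!
With `t = β - 1 ∈ [0, 2]`, the spectral filter satisfies `(λ / (λ + ζ))² ≤ (λ / ζ)^t`, since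
`λ / (λ + ζ)` lies in `[0, 1]` and is at most `λ / ζ`. The lower bound `ζ_i ≥ κ μ_i` turns
`(λ / ζ_i)^t` into `(λ / κ)^t μ_i^{-t}`, which bounds each term of the left-hand sum by
`(λ / κ)^{β-1}` times the corresponding term on the right.
-/

open Real

lemma div_add_sq_le_div_rpow {lam ζ t : ℝ} (hlam : 0 ≤ lam) (hζ : 0 < ζ) (ht₀ : 0 ≤ t)
    (ht₂ : t ≤ 2) : (lam / (lam + ζ)) ^ 2 ≤ (lam / ζ) ^ t := by
  set s := lam / (lam + ζ)
  have hs₀ : 0 ≤ s := by positivity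
  have hs₁ : s ≤ 1 := div_le_one_of_le₀ (by linarith) (by positivity)
  have hs_le : s ≤ lam / ζ := div_le_div_of_nonneg_left hlam hζ (by linarith)
  calc s ^ 2 = s ^ (2 - t) * s ^ t := by
        rw [← rpow_add' hs₀ (by norm_num), sub_add_cancel, rpow_two]
    _ ≤ s ^ t := mul_le_of_le_one_left (by positivity) (rpow_le_one hs₀ hs₁ (by linarith))
    _ ≤ (lam / ζ) ^ t := by gcongr

lemma sq_mul_sq_div_le_rpow_mul {lam κ μ ζ β : ℝ} (a : ℝ) (hlam : 0 ≤ lam) (hκ : 0 < κ)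
    (hμ : 0 < μ) (hζ : κ * μ ≤ ζ) (hβ₁ : 1 ≤ β) (hβ₃ : β ≤ 3) :
    lam ^ 2 * a ^ 2 / ((lam + ζ) ^ 2 * μ) ≤ (lam / κ) ^ (β - 1) * (a ^ 2 * μ ^ (-β)) := by
  have hκμ : 0 < κ * μ := mul_pos hκ hμ
  have hζ₀ : 0 < ζ := hκμ.trans_le hζ
  have hfilter : (lam / (lam + ζ)) ^ 2 ≤ (lam / (κ * μ)) ^ (β - 1) := calc
    _ ≤ (lam / ζ) ^ (β - 1) :=
      div_add_sq_le_div_rpow hlam hζ₀ (by linarith) (by linarith)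
    _ ≤ (lam / (κ * μ)) ^ (β - 1) := by gcongr
  have hμβ : μ ^ (-β) = μ ^ (-(β - 1)) / μ := by
    rw [← rpow_sub_one hμ.ne']
    ring_nf
  calc lam ^ 2 * a ^ 2 / ((lam + ζ) ^ 2 * μ) = a ^ 2 / μ * (lam / (lam + ζ)) ^ 2 := by
        field_simp
    _ ≤ a ^ 2 / μ * (lam / (κ * μ)) ^ (β - 1) := by gcongr
    _ = (lam / κ) ^ (β - 1) * (a ^ 2 * μ ^ (-β)) := by
        rw [hμβ, div_mul_eq_div_div, div_rpow (by positivity) hμ.le, rpow_neg hμ.le]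
        ring

lemma ENNReal.tsum_ofReal_le_ofReal_mul_tsum {ι : Type*} {f g : ι → ℝ} {c : ℝ} (hc : 0 ≤ c)
    (hfg : ∀ i, f i ≤ c * g i) :
    ∑' i, ENNReal.ofReal (f i) ≤ ENNReal.ofReal c * ∑' i, ENNReal.ofReal (g i) := by
  rw [← ENNReal.tsum_mul_left]
  refine ENNReal.tsum_le_tsum fun i => ?_
  rw [← ENNReal.ofReal_mul hc]
  exact ENNReal.ofReal_le_ofReal (hfg i)

/-- Spectral bound on the regularization bias: if `μ_i > 0` and `ζ_i ≥ κ μ_i`, then for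
`β ∈ (1, 2)`, `Σ_i λ² a_i² / ((λ + ζ_i)² μ_i) ≤ (λ/κ)^{β−1} Σ_i a_i² μ_i^{−β}`,
with sums taken in `[0, ∞]`. -/
theorem spectral_bias_bound
    (κ lam β : ℝ) (hκ : 0 < κ) (hlam : 0 < lam) (hβ : β ∈ Set.Ioo (1 : ℝ) 2)
    (a μ ζ : ℕ → ℝ) (hμ : ∀ i, 0 < μ i) (hζ : ∀ i, κ * μ i ≤ ζ i) :
    ∑' i, ENNReal.ofReal (lam ^ 2 * a i ^ 2 / ((lam + ζ i) ^ 2 * μ i)) ≤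
      ENNReal.ofReal ((lam / κ) ^ (β - 1)) *
        ∑' i, ENNReal.ofReal (a i ^ 2 * μ i ^ (-β)) :=
  ENNReal.tsum_ofReal_le_ofReal_mul_tsum (by positivity) fun i =>
    sq_mul_sq_div_le_rpow_mul (a i) hlam.le hκ (hμ i) (hζ i) hβ.1.le (by linarith [hβ.2])
end

section
/- Let H be a real inner product space, λ > 0, G : H → ℝ, g ∈ H, and let v ∈ H be a subgradient of G at g, i.e., G(h) ≥ G(g) + ⟪v, h − g⟫ for all h ∈ H. Suppose f ∈ H minimizes the function h ↦ G(h) + (λ/2)‖h‖² over H. Then ‖f − g‖ ≤ (2/λ)·‖v + λ·g‖. -/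
open scoped RealInnerProductSpace

/-- Error bound for minimizers of a strongly convex regularized objective: if `v` is a
subgradient of `G` at `g` and `f` minimizes `h ↦ G(h) + (λ/2)‖h‖²`, then
`‖f − g‖ ≤ (2/λ)‖v + λ g‖`. -/
theorem regularized_minimizer_error_bound
    {H : Type*} [NormedAddCommGroup H] [InnerProductSpace ℝ H]
    (lam : ℝ) (hlam : 0 < lam) (G : H → ℝ) (g v f : H)
    (hsub : ∀ h, G g + ⟪v, h - g⟫ ≤ G h)
    (hmin : ∀ h, G f + lam / 2 * ‖f‖ ^ 2 ≤ G h + lam / 2 * ‖h‖ ^ 2) :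
    ‖f - g‖ ≤ 2 / lam * ‖v + lam • g‖ := by
  have h1 := hmin g
  have h2 := hsub f
  have hexp : ‖f‖ ^ 2 = ‖f - g‖ ^ 2 + 2 * ⟪f - g, g⟫ + ‖g‖ ^ 2 := by
    have := norm_add_sq_real (f - g) g
    simpa using this
  have hip : ⟪v + lam • g, f - g⟫ = ⟪v, f - g⟫ + lam * ⟪f - g, g⟫ := by
    rw [inner_add_left, real_inner_smul_left, real_inner_comm g (f - g)]
  have key : lam / 2 * ‖f - g‖ ^ 2 ≤ -⟪v + lam • g, f - g⟫ := by
    rw [hip]; nlinarith [h1, h2, hexp]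
  have hb : -⟪v + lam • g, f - g⟫ ≤ ‖v + lam • g‖ * ‖f - g‖ := by
    have := abs_real_inner_le_norm (v + lam • g) (f - g)
    have h' := neg_abs_le (⟪v + lam • g, f - g⟫ : ℝ)
    linarith
  rcases eq_or_lt_of_le (norm_nonneg (f - g)) with h0 | h0
  · rw [← h0]
    positivity
  · have : lam / 2 * ‖f - g‖ ≤ ‖v + lam • g‖ := by
      have := key.trans hb
      nlinarith
    rw [div_mul_eq_mul_div, le_div_iff₀ hlam]
    nlinarith
end

section
/- (Hilbert-space case of the convergence of stochastic gradient descent with biased gradients.) Let H be a real inner product space, f : H → ℝ a differentiable function with gradient ∇f, and f* ∈ ℝ with f* ≤ f(x) for all x ∈ H. Assume f satisfies the L-descent inequality and is μ-gradient dominated with respect to f*, where 0 < μ ≤ L. Let (Ω, ℱ, P) be a probability space, α ∈ (0, 1/(4L)], x₀ ∈ H, and let (δ_t)_{t≥0} be measurable maps Ω → H with E[‖δ_t‖²] ≤ ε_t for each t, where each ‖δ_t‖² is integrable. Define random points x_{t+1}(ω) = x_t(ω) − α·(∇f(x_t(ω)) + δ_t(ω)) for t ≥ 0, and assume each f(x_t)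 − f* is integrable. Then for every t ≥ 1, with ρ = 1 − αμ/2, E[f(x_t)] − f* ≤ ρ^t·(f(x₀) − f*) + α·Σ_{ℓ=0}^{t−1} ρ^{t−1−ℓ}·ε_ℓ. Moreover, if ε_t → 0 as t → ∞, then E[f(x_t)] − f* → 0. -/
/-!
One step of gradient descent with gradient error `d` and step `α ≤ 1/L` decreases `f` by at
least `α/2 ‖∇f‖² − α/2 ‖d‖²`; gradient domination turns this into the contraction
`f(x_{t+1}) − f* ≤ ρ (f(x_t) − f*) + α ‖δ_t‖²`. Taking expectations and unrolling the recursion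
gives the bound; its error term tends to zero with `ε` because the convolution of the summable
sequence `ρ^k` with a null sequence is null (Tannery's theorem).
-/

open scoped RealInnerProductSpace
open MeasureTheory Filter Topology Finset

lemma tendsto_sum_range_pow_mul_of_tendsto_zero {ρ : ℝ} (hρ : |ρ| < 1) {b : ℕ → ℝ}
    (hb : Tendsto b atTop (𝓝 0)) :
    Tendsto (fun t => ∑ ℓ ∈ range t, ρ ^ (t - 1 - ℓ) * b ℓ) atTop (𝓝 0) := by
  obtain ⟨C, hC⟩ := isBounded_iff_forall_norm_le.1 (Metric.isBounded_range_of_tendsto b hb)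
  set F : ℕ → ℕ → ℝ := fun t k => if k < t then ρ ^ k * b (t - 1 - k) else 0
  have hF : ∀ t, ∑ ℓ ∈ range t, ρ ^ (t - 1 - ℓ) * b ℓ = ∑' k, F t k := by
    intro t
    rw [tsum_eq_sum (s := range t) fun k hk => if_neg (by simpa using hk),
      ← sum_range_reflect]
    refine sum_congr rfl fun k hk => ?_
    have hkt := mem_range.1 hk
    simp only [if_pos hkt, Nat.sub_sub_self (Nat.le_sub_one_of_lt hkt)]
  simp_rw [hF]
  have hsum : Summable fun k => |ρ| ^ k * C :=
    (summable_geometric_of_lt_one (abs_nonneg ρ) hρ).mul_right C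
  have hlim : ∀ k, Tendsto (F · k) atTop (𝓝 0) := by
    intro k
    have hshift : Tendsto (fun t => ρ ^ k * b (t - 1 - k)) atTop (𝓝 0) := by
      simpa [Nat.sub_sub] using (hb.comp (tendsto_sub_atTop_nat (1 + k))).const_mul (ρ ^ k)
    refine hshift.congr' ?_
    filter_upwards [eventually_gt_atTop k] with t ht
    simp [F, ht, Nat.sub_sub]
  have hbound : ∀ t k, ‖F t k‖ ≤ |ρ| ^ k * C := by
    intro t k
    have hC0 : 0 ≤ C := (norm_nonneg _).trans (hC _ ⟨0, rfl⟩)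
    by_cases hkt : k < t
    · simp only [F, if_pos hkt, norm_mul, norm_pow, Real.norm_eq_abs]
      exact mul_le_mul_of_nonneg_left (hC _ ⟨_, rfl⟩) (by positivity)
    · simp only [F, if_neg hkt, norm_zero]
      positivity
  simpa using tendsto_tsum_of_dominated_convergence hsum hlim (.of_forall hbound)

lemma le_pow_mul_add_sum_of_le_mul_add {ρ : ℝ} (hρ : 0 ≤ ρ) {e b : ℕ → ℝ}
    (h : ∀ t, e (t + 1) ≤ ρ * e t + b t) (t : ℕ) :
    e t ≤ ρ ^ t * e 0 + ∑ ℓ ∈ range t, ρ ^ (t - 1 - ℓ) * b ℓ := by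
  induction t with
  | zero => simp
  | succ t ih =>
    have hshift : ∑ ℓ ∈ range t, ρ ^ (t - ℓ) * b ℓ =
        ρ * ∑ ℓ ∈ range t, ρ ^ (t - 1 - ℓ) * b ℓ := by
      rw [mul_sum]
      refine sum_congr rfl fun ℓ hℓ => ?_
      rw [show t - ℓ = t - 1 - ℓ + 1 by have := mem_range.1 hℓ; omega, pow_succ]
      ring
    calc e (t + 1) ≤ ρ * e t + b t := h t
      _ ≤ ρ * (ρ ^ t * e 0 + ∑ ℓ ∈ range t, ρ ^ (t - 1 - ℓ) * b ℓ) + b t := by gcongr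
      _ = ρ ^ (t + 1) * e 0 + ∑ ℓ ∈ range (t + 1), ρ ^ (t + 1 - 1 - ℓ) * b ℓ := by
        rw [sum_range_succ, Nat.add_sub_cancel, hshift, Nat.sub_self, pow_zero, pow_succ]
        ring

section GradientStep

variable {H : Type*} [NormedAddCommGroup H] [InnerProductSpace ℝ H] {f : H → ℝ} {L α : ℝ}

lemma descent_biased_step {z g : H} (hα : 0 ≤ α) (hLα : L * α ≤ 1)
    (hdescent : ∀ y, f y ≤ f z + ⟪g, y - z⟫ + L / 2 * ‖y - z‖ ^ 2) (d : H) :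
    f (z - α • (g + d)) ≤ f z - α / 2 * ‖g‖ ^ 2 + α / 2 * ‖d‖ ^ 2 := by
  have h := hdescent (z - α • (g + d))
  rw [sub_sub_cancel_left, inner_neg_right, real_inner_smul_right, norm_neg, norm_smul,
    Real.norm_eq_abs, mul_pow, sq_abs, inner_add_right, real_inner_self_eq_norm_sq,
    norm_add_sq_real] at h
  have hsq : 0 ≤ ‖g‖ ^ 2 + 2 * ⟪g, d⟫ + ‖d‖ ^ 2 := by rw [← norm_add_sq_real]; positivity
  have hquad : L / 2 * (α ^ 2 * (‖g‖ ^ 2 + 2 * ⟪g, d⟫ + ‖d‖ ^ 2)) ≤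
      α / 2 * (‖g‖ ^ 2 + 2 * ⟪g, d⟫ + ‖d‖ ^ 2) := by
    have : L * α * α ≤ 1 * α := mul_le_mul_of_nonneg_right hLα hα
    nlinarith
  -- the cross terms `α ⟪g, d⟫` cancel
  linarith

lemma gradientDominated_biased_step {z g : H} {fstar μ : ℝ} (hα : 0 ≤ α) (hLα : L * α ≤ 1)
    (hdescent : ∀ y, f y ≤ f z + ⟪g, y - z⟫ + L / 2 * ‖y - z‖ ^ 2)
    (hdom : 2 * μ * (f z - fstar) ≤ ‖g‖ ^ 2) (d : H) :
    f (z - α • (g + d)) - fstar ≤ (1 - α * μ / 2) * (f z - fstar) + α * ‖d‖ ^ 2 := by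
  have hstep := descent_biased_step hα hLα hdescent d
  have hdomα := mul_le_mul_of_nonneg_left hdom hα
  nlinarith [sq_nonneg ‖g‖, sq_nonneg ‖d‖]

end GradientStep

lemma integral_sub_le_of_ae_sub_le {Ω : Type*} [MeasurableSpace Ω] {P : Measure Ω}
    [IsProbabilityMeasure P] {X Y D : Ω → ℝ} {c ρ α : ℝ} (hX : Integrable X P)
    (hY : Integrable Y P) (hD : Integrable D P)
    (h : ∀ᵐ ω ∂P, Y ω - c ≤ ρ * (X ω - c) + α * D ω) :
    (∫ ω, Y ω ∂P) - c ≤ ρ * ((∫ ω, X ω ∂P) - c) + α * ∫ ω, D ω ∂P := by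
  have hmono := integral_mono_ae (g := fun ω => ρ * X ω + α * D ω + (1 - ρ) * c) hY
    (((hX.const_mul ρ).add (hD.const_mul α)).add (integrable_const _))
    (h.mono fun ω hω => by linarith)
  rw [integral_add (by exact (hX.const_mul ρ).add (hD.const_mul α)) (integrable_const _),
    integral_add (hX.const_mul ρ) (hD.const_mul α), integral_const_mul, integral_const_mul,
    integral_const, probReal_univ, one_smul] at hmono
  linarith

theorem sgd_biased_convergence_general
    {H : Type*} [NormedAddCommGroup H] [InnerProductSpace ℝ H]
    (f : H → ℝ) (f' : H → H)
    (fstar : ℝ) (hlb : ∀ x, fstar ≤ f x)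
    (L μ : ℝ) (hμ : 0 < μ) (hμL : μ ≤ L)
    (hdescent : ∀ x y, f y ≤ f x + ⟪f' x, y - x⟫ + L / 2 * ‖y - x‖ ^ 2)
    (hdom : ∀ x, 2 * μ * (f x - fstar) ≤ ‖f' x‖ ^ 2)
    {Ω : Type*} [MeasurableSpace Ω] (P : Measure Ω) [IsProbabilityMeasure P]
    (α : ℝ) (hα : α ∈ Set.Ioc (0 : ℝ) (1 / (4 * L)))
    (x₀ : H) (δ : ℕ → Ω → H) (ε : ℕ → ℝ)
    (hδint : ∀ t, Integrable (fun ω => ‖δ t ω‖ ^ 2) P)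
    (hδ : ∀ t, ∫ ω, ‖δ t ω‖ ^ 2 ∂P ≤ ε t)
    (x : ℕ → Ω → H)
    (hx0 : ∀ ω, x 0 ω = x₀)
    (hxrec : ∀ t ω, x (t + 1) ω = x t ω - α • (f' (x t ω) + δ t ω))
    (hfint : ∀ t, Integrable (fun ω => f (x t ω)) P) :
    (∀ t : ℕ, 1 ≤ t →
        (∫ ω, f (x t ω) ∂P) - fstar ≤
          (1 - α * μ / 2) ^ t * (f x₀ - fstar) +
            α * ∑ ℓ ∈ Finset.range t, (1 - α * μ / 2) ^ (t - 1 - ℓ) * ε ℓ) ∧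
    (Filter.Tendsto ε Filter.atTop (nhds 0) →
        Filter.Tendsto (fun t => (∫ ω, f (x t ω) ∂P) - fstar)
          Filter.atTop (nhds 0)) := by
  obtain ⟨hα0, hαL⟩ := hα
  have hLα : L * α ≤ 1 / 4 := by
    rw [le_div_iff₀ (by linarith)] at hαL
    linarith
  have hμα : μ * α ≤ 1 / 4 := (mul_le_mul_of_nonneg_right hμL hα0.le).trans hLα
  have hρ0 : 0 ≤ 1 - α * μ / 2 := by linarith
  have hρ : |1 - α * μ / 2| < 1 := abs_lt.2 ⟨by linarith, by nlinarith [mul_pos hα0 hμ]⟩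
  set ρ := 1 - α * μ / 2
  set e := fun t => (∫ ω, f (x t ω) ∂P) - fstar
  have hstep (t : ℕ) : e (t + 1) ≤ ρ * e t + α * ε t := by
    refine (integral_sub_le_of_ae_sub_le (hfint t) (hfint (t + 1)) (hδint t)
      (.of_forall fun ω => ?_)).trans (by gcongr; exact hδ t)
    rw [hxrec]
    exact gradientDominated_biased_step hα0.le (by linarith) (hdescent _) (hdom _) _
  have hbound (t : ℕ) : e t ≤ ρ ^ t * (f x₀ - fstar) +
      α * ∑ ℓ ∈ range t, ρ ^ (t - 1 - ℓ) * ε ℓ := by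
    simpa [e, hx0, mul_sum, mul_left_comm α] using le_pow_mul_add_sum_of_le_mul_add hρ0 hstep t
  refine ⟨fun t _ => hbound t, fun hε => ?_⟩
  have he0 (t : ℕ) : 0 ≤ e t :=
    sub_nonneg.2 (by simpa using integral_mono (integrable_const fstar) (hfint t) (hlb <| x t ·))
  have hlim := ((tendsto_pow_atTop_nhds_zero_of_lt_one hρ0 (abs_lt.1 hρ).2).mul_const
    (f x₀ - fstar)).add ((tendsto_sum_range_pow_mul_of_tendsto_zero hρ hε).const_mul α)
  rw [zero_mul, mul_zero, add_zero] at hlim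
  exact tendsto_of_tendsto_of_tendsto_of_le_of_le tendsto_const_nhds hlim he0 hbound

/-- Convergence of stochastic gradient descent with biased gradients (Hilbert-space case):
if `f` satisfies the `L`-descent inequality, is `μ`-gradient dominated w.r.t. the lower
bound `f*` with `0 < μ ≤ L`, stepsize `α ∈ (0, 1/(4L)]`, and the gradient errors satisfy
`E[‖δ_t‖²] ≤ ε_t`, then with `ρ = 1 − αμ/2`,
`E[f(x_t)] − f* ≤ ρ^t (f(x₀) − f*) + α Σ_{ℓ<t} ρ^{t−1−ℓ} ε_ℓ`, and `ε_t → 0` implies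
`E[f(x_t)] − f* → 0`. -/
theorem sgd_biased_convergence
    {H : Type*} [NormedAddCommGroup H] [InnerProductSpace ℝ H]
    (f : H → ℝ) (f' : H → H)
    (hdiff : ∀ x, HasFDerivAt f (innerSL ℝ (f' x)) x)
    (fstar : ℝ) (hlb : ∀ x, fstar ≤ f x)
    (L μ : ℝ) (hμ : 0 < μ) (hμL : μ ≤ L)
    (hdescent : ∀ x y, f y ≤ f x + ⟪f' x, y - x⟫ + L / 2 * ‖y - x‖ ^ 2)
    (hdom : ∀ x, 2 * μ * (f x - fstar) ≤ ‖f' x‖ ^ 2)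
    {Ω : Type*} [MeasurableSpace Ω] (P : Measure Ω) [IsProbabilityMeasure P]
    (α : ℝ) (hα : α ∈ Set.Ioc (0 : ℝ) (1 / (4 * L)))
    (x₀ : H) (δ : ℕ → Ω → H) (ε : ℕ → ℝ)
    (hδmeas : ∀ t, AEStronglyMeasurable (δ t) P)
    (hδint : ∀ t, Integrable (fun ω => ‖δ t ω‖ ^ 2) P)
    (hδ : ∀ t, ∫ ω, ‖δ t ω‖ ^ 2 ∂P ≤ ε t)
    (x : ℕ → Ω → H)
    (hx0 : ∀ ω, x 0 ω = x₀)
    (hxrec : ∀ t ω, x (t + 1) ω = x t ω - α • (f' (x t ω) + δ t ω))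
    (hfint : ∀ t, Integrable (fun ω => f (x t ω)) P) :
    (∀ t : ℕ, 1 ≤ t →
        (∫ ω, f (x t ω) ∂P) - fstar ≤
          (1 - α * μ / 2) ^ t * (f x₀ - fstar) +
            α * ∑ ℓ ∈ Finset.range t, (1 - α * μ / 2) ^ (t - 1 - ℓ) * ε ℓ) ∧
    (Filter.Tendsto ε Filter.atTop (nhds 0) →
        Filter.Tendsto (fun t => (∫ ω, f (x t ω) ∂P) - fstar)
          Filter.atTop (nhds 0)) :=
  sgd_biased_convergence_general f f' fstar hlb L μ hμ hμL hdescent hdom P α hα x₀ δ ε hδint hδ x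
    hx0 hxrec hfint
end
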